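/- arXiv:1105.0854 — 2 statements merged into one kernel-verified Lean document; each statement's English description precedes it below -/
import Mathlib

section
/- Let 0 < ε < 0.2, L ≥ 0 and let T : E → F be a bijective φ-isometry between normed spaces for φ(t) = (1+ε)t + L. Then for all a, b ∈ E, ‖T((a+b)/2) − (Ta+Tb)/2‖ ≤ 3ε‖a−b‖ + (4/ε)·L. -/
/-!
A quantitative form of Väisälä's proof of the Mazur–Ulam theorem. Let `m` and `q` be the
midpoints of `a, b` and of `T a, T b`, and `σₘ`, `σ_q` the point reflections in them. The map
`ψ₀ = σₘ ∘ T⁻¹ ∘ σ_q ∘ T` fixes `a` and `b`, and `2‖T m - q‖ ≤ (1 + ε) ‖ψ₀ m - m‖ + L`.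
The maps `ψₖ₊₁ = σₘ ∘ ψₖ⁻¹ ∘ σₘ ∘ ψₖ` still fix `a` and `b`, are `φₖ`-isometries for
`φₖ t = (1 + ε) ^ 2 ^ (k + 1) * t + O(2 ^ k L)`, and almost double the displacement of `m`:
`2‖ψₖ m - m‖ ≤ (1 + ε) ^ 2 ^ (k + 1) * ‖ψₖ₊₁ m - m‖ + O(2 ^ k L)`. On the other hand a map fixing
`a` and `b` moves `m` by at most about `‖a - b‖ / 2`. Unrolling `n` doubling steps, with `n`
chosen so that `(1 + ε) ^ 2 ^ (n + 2) ∈ (2, 4]` (that is, `2 ^ n` of order `1 / ε`), divides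
this bound by `2 ^ n` while the additive errors add up to `O(n L) = O(L / ε)`.
-/

open Function Real Set

section

variable {α β γ : Type*} [PseudoMetricSpace α] [PseudoMetricSpace β] [PseudoMetricSpace γ]

def LipschitzUpTo (A B : ℝ) (f : α → β) : Prop :=
  ∀ x y, dist (f x) (f y) ≤ A * dist x y + B

-- `e` is a `φ`-isometry for `φ t = A * t + B`.
def BiLipschitzUpTo (A B : ℝ) (e : α ≃ β) : Prop :=
  LipschitzUpTo A B e ∧ LipschitzUpTo A B e.symm

variable {A A' B B' : ℝ}

namespace LipschitzUpTo

variable {f : α → β}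

lemma mono (hf : LipschitzUpTo A B f) (hA : A ≤ A') (hB : B ≤ B') : LipschitzUpTo A' B' f :=
  fun x y => (hf x y).trans (by gcongr)

lemma comp {A₁ B₁ : ℝ} {g : β → γ} (hg : LipschitzUpTo A B g) (hf : LipschitzUpTo A₁ B₁ f)
    (hA : 0 ≤ A) : LipschitzUpTo (A * A₁) (A * B₁ + B) (g ∘ f) := fun x y =>
  calc dist (g (f x)) (g (f y)) ≤ A * dist (f x) (f y) + B := hg _ _
    _ ≤ A * (A₁ * dist x y + B₁) + B := by gcongr; exact hf x y
    _ = A * A₁ * dist x y + (A * B₁ + B) := by ring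

lemma comp_isometry (hf : LipschitzUpTo A B f) {g : γ → α} (hg : Isometry g) :
    LipschitzUpTo A B (f ∘ g) := fun x y => by
  simpa only [comp_apply, hg.dist_eq] using hf (g x) (g y)

lemma isometry_comp {g : β → γ} (hg : Isometry g) (hf : LipschitzUpTo A B f) :
    LipschitzUpTo A B (g ∘ f) := fun x y => by
  simpa only [comp_apply, hg.dist_eq] using hf x y

end LipschitzUpTo

lemma BiLipschitzUpTo.mono {e : α ≃ β} (he : BiLipschitzUpTo A B e) (hA : A ≤ A') (hB : B ≤ B') :
    BiLipschitzUpTo A' B' e :=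
  ⟨he.1.mono hA hB, he.2.mono hA hB⟩

end

lemma sq_mul_le_of_doubling {A B d : ℝ} {D : ℕ → ℝ} (hA : 1 ≤ A) (hB : 0 ≤ B)
    (hdouble : ∀ k, 2 * D k ≤ A ^ 2 ^ (k + 1) * D (k + 1) + 2 ^ (k + 1) * B * A ^ 2 ^ (k + 1))
    (hbound : ∀ k, D k ≤ A ^ 2 ^ (k + 1) * (d / 2) + 2 ^ (k + 1) * B * A ^ 2 ^ (k + 1))
    (n : ℕ) : A ^ 2 * D 0 ≤ A ^ 2 ^ (n + 2) * (d / 2 ^ (n + 1) + (n + 2) * B) := by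
  have hpow : ∀ k, A ^ 2 ^ (k + 2) = A ^ 2 ^ (k + 1) * A ^ 2 ^ (k + 1) := fun k => by ring
  have hmono : ∀ k, A ^ 2 ^ (k + 1) ≤ A ^ 2 ^ (k + 2) := fun k =>
    pow_le_pow_right₀ hA (Nat.pow_le_pow_right two_pos k.succ.le_succ)
  -- Rescaled so that the doubling inequality telescopes.
  set f : ℕ → ℝ := fun k => A ^ 2 ^ (k + 1) * D k / 2 ^ k
  have hstep : ∀ k, f k ≤ f (k + 1) + B * A ^ 2 ^ (k + 2) := fun k =>
    calc f k = A ^ 2 ^ (k + 1) * (2 * D k) / 2 ^ (k + 1) := by simp only [f, pow_succ]; ring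
      _ ≤ A ^ 2 ^ (k + 1) * (A ^ 2 ^ (k + 1) * D (k + 1) + 2 ^ (k + 1) * B * A ^ 2 ^ (k + 1)) /
          2 ^ (k + 1) := by gcongr; exact hdouble k
      _ = f (k + 1) + B * A ^ 2 ^ (k + 2) := by simp only [f, hpow]; field_simp
  have hunroll : ∀ k, f 0 ≤ f k + k * B * A ^ 2 ^ (k + 1) := fun k => by
    induction k with
    | zero => simp
    | succ k ih =>
      have := mul_le_mul_of_nonneg_left (hmono k) (by positivity : 0 ≤ (k : ℝ) * B)
      push_cast
      linarith [hstep k]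
  have hlast : f n ≤ A ^ 2 ^ (n + 2) * (d / 2 ^ (n + 1) + 2 * B) :=
    calc f n = A ^ 2 ^ (n + 1) * D n / 2 ^ n := rfl
      _ ≤ A ^ 2 ^ (n + 1) * (A ^ 2 ^ (n + 1) * (d / 2) + 2 ^ (n + 1) * B * A ^ 2 ^ (n + 1)) /
          2 ^ n := by gcongr; exact hbound n
      _ = A ^ 2 ^ (n + 2) * (d / 2 ^ (n + 1) + 2 * B) := by rw [hpow, pow_succ]; field_simp; ring
  have hf0 : f 0 = A ^ 2 * D 0 := by simp [f]
  have := mul_le_mul_of_nonneg_left (hmono n) (by positivity : 0 ≤ (n : ℝ) * B)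
  linarith [hunroll n]

section MidpointReflection

variable {E PE F PF : Type*} [NormedAddCommGroup E] [NormedSpace ℝ E] [MetricSpace PE]
  [NormedAddTorsor E PE] [NormedAddCommGroup F] [NormedSpace ℝ F] [MetricSpace PF]
  [NormedAddTorsor F PF]

open Equiv (pointReflection)

lemma isometry_pointReflection (p : PE) : Isometry (pointReflection p) :=
  (AffineIsometryEquiv.pointReflection ℝ p).isometry

-- The map of Väisälä's proof of the Mazur–Ulam theorem, see `IsometryEquiv.midpoint_fixed`.
noncomputable def midpointReflectionConj (a b : PE) (e : PE ≃ PF) : Equiv.Perm PE :=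
  ((e.trans (pointReflection (midpoint ℝ (e a) (e b)))).trans e.symm).trans
    (pointReflection (midpoint ℝ a b))

variable {A B : ℝ} {e : PE ≃ PF}

lemma coe_midpointReflectionConj (a b : PE) (e : PE ≃ PF) :
    ⇑(midpointReflectionConj a b e) = pointReflection (midpoint ℝ a b) ∘ e.symm ∘
      pointReflection (midpoint ℝ (e a) (e b)) ∘ e :=
  rfl

lemma coe_midpointReflectionConj_symm (a b : PE) (e : PE ≃ PF) :
    ⇑(midpointReflectionConj a b e).symm = e.symm ∘ pointReflection (midpoint ℝ (e a) (e b)) ∘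
      e ∘ pointReflection (midpoint ℝ a b) := by
  simp [midpointReflectionConj, Equiv.coe_trans, comp_assoc]

lemma midpointReflectionConj_apply_left (a b : PE) (e : PE ≃ PF) :
    midpointReflectionConj a b e a = a := by
  simp [coe_midpointReflectionConj]

lemma midpointReflectionConj_apply_right (a b : PE) (e : PE ≃ PF) :
    midpointReflectionConj a b e b = b := by
  simp [coe_midpointReflectionConj]

lemma BiLipschitzUpTo.midpointReflectionConj (he : BiLipschitzUpTo A B e) (hA : 0 ≤ A)
    (a b : PE) : BiLipschitzUpTo (A * A) (A * B + B) (midpointReflectionConj a b e) := by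
  rw [BiLipschitzUpTo, coe_midpointReflectionConj, coe_midpointReflectionConj_symm]
  have hσ := isometry_pointReflection (midpoint ℝ (e a) (e b))
  exact ⟨.isometry_comp (isometry_pointReflection _) ((he.2.comp_isometry hσ).comp he.1 hA),
    (he.2.comp_isometry hσ).comp (he.1.comp_isometry (isometry_pointReflection _)) hA⟩

lemma LipschitzUpTo.two_mul_dist_midpoint_le (he : LipschitzUpTo A B e) (a b : PE) :
    2 * dist (e (midpoint ℝ a b)) (midpoint ℝ (e a) (e b)) ≤
      A * dist (midpointReflectionConj a b e (midpoint ℝ a b)) (midpoint ℝ a b) + B := by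
  set m := midpoint ℝ a b
  set y := e.symm (pointReflection (midpoint ℝ (e a) (e b)) (e m))
  calc 2 * dist (e m) (midpoint ℝ (e a) (e b)) = dist (e y) (e m) := by
        rw [e.apply_symm_apply, dist_pointReflection_right ℝ, Real.norm_two, dist_comm]
    _ ≤ A * dist y m + B := he _ _
    _ = A * dist (midpointReflectionConj a b e m) m + B := by
        rw [coe_midpointReflectionConj, comp_apply, dist_pointReflection_left, dist_comm]; rfl

lemma LipschitzUpTo.dist_apply_midpoint_le {f : PE → PE} (hf : LipschitzUpTo A B f) {a b : PE}
    (ha : f a = a) (hb : f b = b) :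
    dist (f (midpoint ℝ a b)) (midpoint ℝ a b) ≤ A * (dist a b / 2) + B := by
  set m := midpoint ℝ a b
  have hma : dist m a = dist a b / 2 := by simp [m, div_eq_inv_mul]
  have hmb : dist m b = dist a b / 2 := by simp [m, div_eq_inv_mul]
  calc dist (f m) m = dist (midpoint ℝ (f m) (f m)) m := by rw [midpoint_self]
    _ ≤ (dist (f m) a + dist (f m) b) / 2 := by
        simpa using dist_midpoint_midpoint_le' (𝕜 := ℝ) (f m) (f m) a b
    _ ≤ ((A * (dist a b / 2) + B) + (A * (dist a b / 2) + B)) / 2 := by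
        gcongr
        · simpa [ha, hma] using hf m a
        · simpa [hb, hmb] using hf m b
    _ = A * (dist a b / 2) + B := by ring

lemma BiLipschitzUpTo.iterate_midpointReflectionConj (he : BiLipschitzUpTo A B e) (hA : 1 ≤ A)
    (hB : 0 ≤ B) (a b : PE) (k : ℕ) :
    BiLipschitzUpTo (A ^ 2 ^ (k + 1)) (2 ^ (k + 1) * B * A ^ 2 ^ (k + 1))
      ((_root_.midpointReflectionConj a b)^[k] (_root_.midpointReflectionConj a b e)) := by
  induction k with
  | zero =>
    refine (he.midpointReflectionConj (by linarith) a b).mono (le_of_eq (by ring)) ?_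
    norm_num
    nlinarith [mul_le_mul_of_nonneg_left hA hB]
  | succ k ih =>
    rw [iterate_succ_apply']
    have h1 : 1 ≤ A ^ 2 ^ (k + 1) := one_le_pow₀ hA
    refine (ih.midpointReflectionConj (by linarith) a b).mono (le_of_eq (by ring)) ?_
    have h2 : 0 ≤ 2 ^ (k + 1) * B * A ^ 2 ^ (k + 1) := by positivity
    calc A ^ 2 ^ (k + 1) * (2 ^ (k + 1) * B * A ^ 2 ^ (k + 1)) + 2 ^ (k + 1) * B * A ^ 2 ^ (k + 1)
        ≤ 2 * A ^ 2 ^ (k + 1) * (2 ^ (k + 1) * B * A ^ 2 ^ (k + 1)) := by nlinarith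
      _ = 2 ^ (k + 1 + 1) * B * A ^ 2 ^ (k + 1 + 1) := by ring

lemma iterate_midpointReflectionConj_apply_left (a b : PE) (e : PE ≃ PF) (k : ℕ) :
    (midpointReflectionConj a b)^[k] (midpointReflectionConj a b e) a = a := by
  cases k with
  | zero => exact midpointReflectionConj_apply_left a b e
  | succ k => rw [iterate_succ_apply']; exact midpointReflectionConj_apply_left a b _

lemma iterate_midpointReflectionConj_apply_right (a b : PE) (e : PE ≃ PF) (k : ℕ) :
    (midpointReflectionConj a b)^[k] (midpointReflectionConj a b e) b = b := by
  cases k with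
  | zero => exact midpointReflectionConj_apply_right a b e
  | succ k => rw [iterate_succ_apply']; exact midpointReflectionConj_apply_right a b _

theorem BiLipschitzUpTo.mul_two_mul_dist_midpoint_sub_le (he : BiLipschitzUpTo A B e)
    (hA : 1 ≤ A) (hB : 0 ≤ B) (a b : PE) (n : ℕ) :
    A * (2 * dist (e (midpoint ℝ a b)) (midpoint ℝ (e a) (e b)) - B) ≤
      A ^ 2 ^ (n + 2) * (dist a b / 2 ^ (n + 1) + (n + 2) * B) := by
  set m := midpoint ℝ a b
  set ψ : ℕ → Equiv.Perm PE := fun k =>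
    (_root_.midpointReflectionConj a b)^[k] (_root_.midpointReflectionConj a b e)
  have hψ := he.iterate_midpointReflectionConj hA hB a b
  have hψa := iterate_midpointReflectionConj_apply_left a b e
  have hψb := iterate_midpointReflectionConj_apply_right a b e
  have hdouble (k : ℕ) : 2 * dist (ψ k m) m ≤
      A ^ 2 ^ (k + 1) * dist (ψ (k + 1) m) m + 2 ^ (k + 1) * B * A ^ 2 ^ (k + 1) := by
    have h := (hψ k).1.two_mul_dist_midpoint_le a b
    rwa [hψa, hψb, ← iterate_succ_apply' (_root_.midpointReflectionConj a b)] at h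
  have h0 := sq_mul_le_of_doubling hA hB hdouble
    (fun k => (hψ k).1.dist_apply_midpoint_le (hψa k) (hψb k)) n
  have h1 : 2 * dist (e m) (midpoint ℝ (e a) (e b)) ≤ A * dist (ψ 0 m) m + B :=
    he.1.two_mul_dist_midpoint_le a b
  calc A * (2 * dist (e m) (midpoint ℝ (e a) (e b)) - B) ≤ A * (A * dist (ψ 0 m) m) :=
        mul_le_mul_of_nonneg_left (by linarith) (by linarith)
    _ = A ^ 2 * dist (ψ 0 m) m := by ring
    _ ≤ _ := h0

end MidpointReflection

lemma exp_two_mul_log_two : exp (2 * log 2) = 4 := by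
  rw [two_mul, exp_add, exp_log two_pos]; norm_num

lemma exp_le_three_mul_of_mem_Icc {t : ℝ} (ht : t ∈ Icc (log 2) (2 * log 2)) :
    exp t ≤ 3 * t := by
  have hlog : 2 / 3 < log 2 := by linarith [log_two_gt_d9]
  set s := t / log 2 - 1
  have hs : (1 - s) * log 2 + s * (2 * log 2) = t := by simp only [s]; field_simp; ring
  have hs₀ : 0 ≤ s := by rw [sub_nonneg, le_div_iff₀ (by linarith)]; linarith [ht.1]
  have hs₁ : 0 ≤ 1 - s := by
    rw [sub_nonneg, sub_le_iff_le_add, div_le_iff₀ (by linarith)]; linarith [ht.2]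
  -- `exp` lies below its chord through `(log 2, 2)` and `(2 log 2, 4)`.
  have hchord := convexOn_exp.2 (mem_univ (log 2)) (mem_univ (2 * log 2)) hs₁ hs₀ (by ring)
  simp only [smul_eq_mul, hs, exp_log two_pos, exp_two_mul_log_two] at hchord
  have : s * log 2 = t - log 2 := by simp only [s]; field_simp
  nlinarith [ht.1]

lemma exists_pow_two_pow_le {ε : ℝ} (hε : 0 < ε) (hε2 : (1 + ε) ^ 2 ≤ 2) :
    ∃ n : ℕ, (1 + ε) ^ 2 ^ (n + 2) / 2 ^ (n + 1) ≤ 6 * ε ∧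
      (1 + ε) ^ 2 ^ (n + 2) * (n + 2) ≤ 4 * (1 + ε) / ε := by
  set α := log (1 + ε)
  have hα : 0 < α := log_pos (by linarith)
  have hαε : α ≤ ε := by linarith [log_le_sub_one_of_pos (by linarith : 0 < 1 + ε)]
  have hεα : ε / (1 + ε) ≤ α :=
    calc ε / (1 + ε) = 1 - (1 + ε)⁻¹ := by field_simp; ring
      _ ≤ α := one_sub_inv_le_log_of_pos (by linarith)
  have hα2 : 2 * α ≤ log 2 := by
    simpa [log_pow] using log_le_log (by positivity) hε2
  obtain ⟨n, hn₁, hn₂⟩ := exists_nat_pow_near (x := log 2 / (2 * α)) (y := 2)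
    (by rw [le_div_iff₀ (by positivity)]; linarith) one_lt_two
  rw [le_div_iff₀ (by positivity)] at hn₁
  rw [div_lt_iff₀ (by positivity)] at hn₂
  set t := 2 ^ (n + 2) * α
  have ht : t ∈ Icc (log 2) (2 * log 2) := ⟨by simp only [t, pow_succ] at hn₂ ⊢; linarith,
    by simp only [t, pow_succ] at hn₁ ⊢; linarith⟩
  have hM : (1 + ε) ^ 2 ^ (n + 2) = exp t := by
    rw [← exp_log (by linarith : 0 < 1 + ε), ← exp_nat_mul]; push_cast; rfl
  have hn : (n : ℝ) + 2 ≤ 2 ^ (n + 1) := by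
    exact_mod_cast Nat.lt_two_pow_self (n := n + 1)
  refine ⟨n, ?_, ?_⟩
  · rw [hM, div_le_iff₀ (by positivity)]
    calc exp t ≤ 3 * t := exp_le_three_mul_of_mem_Icc ht
      _ ≤ 3 * (2 ^ (n + 2) * ε) := by simp only [t]; gcongr
      _ = 6 * ε * 2 ^ (n + 1) := by ring
  · have hM4 : exp t ≤ 4 := exp_two_mul_log_two ▸ exp_le_exp.2 ht.2
    have : ((n : ℝ) + 2) * (ε / (1 + ε)) ≤ 1 := by
      calc ((n : ℝ) + 2) * (ε / (1 + ε)) ≤ 2 ^ (n + 1) * α := by gcongr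
        _ ≤ log 2 := by rw [pow_succ]; linarith
        _ ≤ 1 := by linarith [log_two_lt_d9]
    rw [mul_div_assoc', div_le_one (by positivity)] at this
    rw [hM, le_div_iff₀ hε, mul_assoc]
    gcongr

theorem midpoint_estimate_lipschitz_perturbed
    {E F : Type*} [NormedAddCommGroup E] [NormedSpace ℝ E]
    [NormedAddCommGroup F] [NormedSpace ℝ F]
    (ε L : ℝ) (hε0 : 0 < ε) (hε1 : ε < 0.2) (hL : 0 ≤ L)
    (T : E → F) (hbij : Function.Bijective T)
    (hT : ∀ x y : E, ‖T x - T y‖ ≤ (1 + ε) * ‖x - y‖ + L)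
    (hTinv : ∀ f g : F, ‖Function.invFun T f - Function.invFun T g‖ ≤ (1 + ε) * ‖f - g‖ + L)
    (a b : E) :
    ‖T ((2:ℝ)⁻¹ • (a + b)) - (2:ℝ)⁻¹ • (T a + T b)‖ ≤ 3 * ε * ‖a - b‖ + (4 / ε) * L := by
  let e : E ≃ F := ⟨T, invFun T, leftInverse_invFun hbij.1, rightInverse_invFun hbij.2⟩
  have he : BiLipschitzUpTo (1 + ε) L e :=
    ⟨fun x y => by rw [dist_eq_norm, dist_eq_norm]; exact hT x y,
      fun f g => by rw [dist_eq_norm, dist_eq_norm]; exact hTinv f g⟩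
  have hε : ε < 1 / 5 := by norm_num at hε1; exact hε1
  obtain ⟨n, hd, hL'⟩ := exists_pow_two_pow_le hε0 (by nlinarith)
  have key := he.mul_two_mul_dist_midpoint_sub_le (by linarith) hL a b n
  simp only [e, midpoint_eq_smul_add, invOf_eq_inv, dist_eq_norm, Equiv.coe_fn_mk] at key
  set X := ‖T ((2:ℝ)⁻¹ • (a + b)) - (2:ℝ)⁻¹ • (T a + T b)‖
  set d := ‖a - b‖
  set M := (1 + ε) ^ 2 ^ (n + 2)
  have hM : M * (d / 2 ^ (n + 1) + (n + 2) * L) ≤ (1 + ε) * (6 * ε * d + 4 / ε * L) :=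
    calc M * (d / 2 ^ (n + 1) + (n + 2) * L) = M / 2 ^ (n + 1) * d + M * (n + 2) * L := by ring
      _ ≤ 6 * ε * d + 4 * (1 + ε) / ε * L := by gcongr
      _ ≤ (1 + ε) * (6 * ε * d + 4 / ε * L) := by
        field_simp
        nlinarith [mul_nonneg (pow_pos hε0 3).le (norm_nonneg (a - b))]
  have h2X : 2 * X - L ≤ 6 * ε * d + 4 / ε * L :=
    le_of_mul_le_mul_left (key.trans hM) (by linarith)
  have hL4 : L ≤ 4 / ε * L := le_mul_of_one_le_left hL (by rw [le_div_iff₀ hε0]; linarith)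
  linarith
end

section
/- Let E, F be normed spaces, T : E → F a bijective φ-isometry for φ(t) = Mt + L with 1 < M < 1.2 and L ≥ 0, and let f, g ∈ E with ‖f‖, ‖g‖ ≤ m. Then ‖T((f+g)/2) − (Tf+Tg)/2‖ ≤ 3(M−1)·2m + (4/(M−1))·L ≤ 6(M−1)m + (4/(M−1))L. -/
/-!
Conjugating the point reflection of `F` that swaps `T f` and `T g` by `T` gives an involution
`V` of `E` swapping `f` and `g`; it is again a bijective quasi-isometry, with constants
`(M², M L + L)`, and `T f + T g - T c = T (V c)` for the midpoint `c`. Hence the midpoint defect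
of `T` at `f, g` is at most `(M ‖V c - c‖ + L) / 2`, and `‖V c - c‖` is the midpoint defect of
`V` at `f, g`. Iterating `n` times squares the multiplicative constant each time: the defect is
at most `M ^ (2 ^ (n+1) - 1) / 2 ^ (n+1) · ‖f - g‖` plus an additive term that stays below
`4 L / (M - 1)` as long as `M ^ 2 ^ n ≤ 2`. Stopping at the last such `n`, so that
`2 < x := M ^ 2 ^ (n+1) ≤ 4`, concavity of `log` on `[2, 4]` gives
`x ≤ 3 log x ≤ 3 · 2 ^ (n+1) (M - 1)`.
-/

open Function

section QuasiIsometry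

variable {G H : Type*} [SeminormedAddCommGroup G] [SeminormedAddCommGroup H]

structure IsQuasiIsometryEquiv (A B : ℝ) (U : G → H) : Prop where
  bijective : Bijective U
  norm_sub_le : ∀ a b, ‖U a - U b‖ ≤ A * ‖a - b‖ + B
  norm_invFun_sub_le : ∀ u v, ‖invFun U u - invFun U v‖ ≤ A * ‖u - v‖ + B

noncomputable def pullbackReflection (U : G → H) (x y : G) : G → G :=
  fun a => invFun U (U x + U y - U a)

namespace IsQuasiIsometryEquiv

variable {A B : ℝ} {U : G → H}

theorem pullbackReflection_involutive (hU : IsQuasiIsometryEquiv A B U) (x y : G) :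
    Involutive (pullbackReflection U x y) := fun a => by
  simp only [pullbackReflection, rightInverse_invFun hU.bijective.surjective _, sub_sub_cancel,
    leftInverse_invFun hU.bijective.injective _]

theorem pullbackReflection_left (hU : IsQuasiIsometryEquiv A B U) (x y : G) :
    pullbackReflection U x y x = y := by
  simp only [pullbackReflection, add_sub_cancel_left, leftInverse_invFun hU.bijective.injective _]

theorem pullbackReflection_right (hU : IsQuasiIsometryEquiv A B U) (x y : G) :
    pullbackReflection U x y y = x := by
  simp only [pullbackReflection, add_sub_cancel_right, leftInverse_invFun hU.bijective.injective _]

theorem pullbackReflection_isQuasiIsometryEquiv (hU : IsQuasiIsometryEquiv A B U) (x y : G)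
    (hA : 0 ≤ A) : IsQuasiIsometryEquiv (A ^ 2) (A * B + B) (pullbackReflection U x y) := by
  have hinv := hU.pullbackReflection_involutive x y
  have hle (a b : G) : ‖pullbackReflection U x y a - pullbackReflection U x y b‖ ≤
      A ^ 2 * ‖a - b‖ + (A * B + B) :=
    calc _ ≤ A * ‖(U x + U y - U a) - (U x + U y - U b)‖ + B := hU.norm_invFun_sub_le _ _
      _ = A * ‖U b - U a‖ + B := by rw [sub_sub_sub_cancel_left]
      _ ≤ A * (A * ‖a - b‖ + B) + B := by
        gcongr; rw [norm_sub_rev a b]; exact hU.norm_sub_le b a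
      _ = A ^ 2 * ‖a - b‖ + (A * B + B) := by ring
  refine ⟨hinv.bijective, hle, ?_⟩
  rwa [invFun_eq_of_injective_of_rightInverse hinv.injective hinv.rightInverse]

end IsQuasiIsometryEquiv

variable [NormedSpace ℝ G] [NormedSpace ℝ H]

noncomputable def midpointDefect (U : G → H) (x y : G) : ℝ :=
  ‖U ((2:ℝ)⁻¹ • (x + y)) - (2:ℝ)⁻¹ • (U x + U y)‖

theorem midpointDefect_le {A B : ℝ} {U : G → H} (hU : ∀ a b, ‖U a - U b‖ ≤ A * ‖a - b‖ + B)
    (x y : G) : midpointDefect U x y ≤ A * ‖x - y‖ / 2 + B := by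
  set c : G := (2:ℝ)⁻¹ • (x + y)
  have hcx : ‖c - x‖ = ‖x - y‖ / 2 := by
    rw [show c - x = (2:ℝ)⁻¹ • (y - x) by module, norm_smul, norm_sub_rev]; norm_num; ring
  have hcy : ‖c - y‖ = ‖x - y‖ / 2 := by
    rw [show c - y = (2:ℝ)⁻¹ • (x - y) by module, norm_smul]; norm_num; ring
  have hUx := hU c x
  have hUy := hU c y
  rw [hcx] at hUx
  rw [hcy] at hUy
  calc midpointDefect U x y = ‖(U c - U x) + (U c - U y)‖ / 2 := by
        rw [midpointDefect, show U c - (2:ℝ)⁻¹ • (U x + U y)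
          = (2:ℝ)⁻¹ • ((U c - U x) + (U c - U y)) by module, norm_smul]
        norm_num; ring
    _ ≤ (‖U c - U x‖ + ‖U c - U y‖) / 2 := by gcongr; exact norm_add_le _ _
    _ ≤ A * ‖x - y‖ / 2 + B := by linarith

theorem IsQuasiIsometryEquiv.midpointDefect_le_pullbackReflection {A B : ℝ} {U : G → H}
    (hU : IsQuasiIsometryEquiv A B U) (x y : G) :
    midpointDefect U x y ≤ (A * midpointDefect (pullbackReflection U x y) x y + B) / 2 := by
  set c : G := (2:ℝ)⁻¹ • (x + y)
  have hreflect :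
      U c - U (pullbackReflection U x y c) = (2:ℝ) • (U c - (2:ℝ)⁻¹ • (U x + U y)) := by
    rw [pullbackReflection, rightInverse_invFun hU.bijective.surjective]
    module
  have hdefect :
      midpointDefect (pullbackReflection U x y) x y = ‖c - pullbackReflection U x y c‖ := by
    rw [midpointDefect, hU.pullbackReflection_left, hU.pullbackReflection_right, add_comm y x,
      norm_sub_rev]
  have h := hU.norm_sub_le c (pullbackReflection U x y c)
  rw [hreflect, norm_smul, Real.norm_two, ← hdefect] at h
  exact (le_div_iff₀' two_pos).2 h

noncomputable def midpointBound : ℕ → ℝ → ℝ → ℝ → ℝ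
  | 0, A, B, d => A * d / 2 + B
  | n + 1, A, B, d => (A * midpointBound n (A ^ 2) (A * B + B) d + B) / 2

theorem IsQuasiIsometryEquiv.midpointDefect_le_midpointBound_succ {A B : ℝ} {U : G → H}
    (hU : IsQuasiIsometryEquiv A B U) (hA : 0 ≤ A) {n : ℕ} {x y : G}
    (h : midpointDefect (pullbackReflection U x y) x y ≤
      midpointBound n (A ^ 2) (A * B + B) ‖x - y‖) :
    midpointDefect U x y ≤ midpointBound (n + 1) A B ‖x - y‖ :=
  (hU.midpointDefect_le_pullbackReflection x y).trans (by rw [midpointBound]; gcongr)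

-- Stated for self-maps because `pullbackReflection U x y` maps `G` to `G` whatever `H` is, so an
-- induction over maps `G → H` would have to change the universe of the codomain.
theorem IsQuasiIsometryEquiv.midpointDefect_le_midpointBound_of_endo {A B : ℝ} {U : G → G}
    (hU : IsQuasiIsometryEquiv A B U) (hA : 0 ≤ A) (n : ℕ) (x y : G) :
    midpointDefect U x y ≤ midpointBound n A B ‖x - y‖ := by
  induction n generalizing U A B with
  | zero => exact midpointDefect_le hU.norm_sub_le x y
  | succ n ih =>
    exact hU.midpointDefect_le_midpointBound_succ hA
      (ih (hU.pullbackReflection_isQuasiIsometryEquiv x y hA) (by positivity))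

theorem IsQuasiIsometryEquiv.midpointDefect_le_midpointBound {A B : ℝ} {U : G → H}
    (hU : IsQuasiIsometryEquiv A B U) (hA : 0 ≤ A) (n : ℕ) (x y : G) :
    midpointDefect U x y ≤ midpointBound n A B ‖x - y‖ := by
  cases n with
  | zero => exact midpointDefect_le hU.norm_sub_le x y
  | succ n =>
    exact hU.midpointDefect_le_midpointBound_succ hA
      ((hU.pullbackReflection_isQuasiIsometryEquiv x y hA).midpointDefect_le_midpointBound_of_endo
          (by positivity) n x y)

end QuasiIsometry

theorem midpointBound_le {A B : ℝ} (hA : 1 < A) (hB : 0 ≤ B) (n : ℕ) (hAn : A ^ 2 ^ n ≤ 2)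
    (d : ℝ) :
    midpointBound n A B d ≤ A ^ (2 ^ (n + 1) - 1) / 2 ^ (n + 1) * d + 4 / (A - 1) * B := by
  induction n generalizing A B with
  | zero =>
    rw [pow_zero, pow_one] at hAn
    have : B ≤ 4 / (A - 1) * B := by
      rw [div_mul_eq_mul_div, le_div_iff₀ (by linarith)]
      nlinarith
    simp only [midpointBound, zero_add, pow_one]
    norm_num
    linarith
  | succ n ih =>
    have hA2 : A ^ 2 ≤ 2 := by
      refine (pow_le_pow_right₀ hA.le ?_).trans hAn
      rw [pow_succ]
      have := Nat.one_le_two_pow (n := n)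
      omega
    have ih := ih (B := A * B + B) (one_lt_pow₀ hA two_ne_zero) (by positivity)
      (by rwa [← pow_mul, ← pow_succ'])
    have hexp : A * (A ^ 2) ^ (2 ^ (n + 1) - 1) = A ^ (2 ^ (n + 2) - 1) := by
      rw [← pow_mul, ← pow_succ']
      congr 1
      have := Nat.one_le_two_pow (n := n + 1)
      rw [pow_succ 2 (n + 1)]
      omega
    -- amounts to `A ≤ 9 / 5`, which follows from `A ^ 2 ≤ 2`
    have hcoef : (4 * A / (A - 1) + 1) / 2 ≤ 4 / (A - 1) := by
      rw [div_add_one (by linarith), div_div, div_le_div_iff₀ (by nlinarith) (by linarith)]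
      nlinarith
    calc midpointBound (n + 1) A B d = (A * midpointBound n (A ^ 2) (A * B + B) d + B) / 2 := rfl
      _ ≤ (A * ((A ^ 2) ^ (2 ^ (n + 1) - 1) / 2 ^ (n + 1) * d + 4 / (A ^ 2 - 1) * (A * B + B))
          + B) / 2 := by gcongr
      _ = A ^ (2 ^ (n + 2) - 1) / 2 ^ (n + 2) * d + (4 * A / (A - 1) + 1) / 2 * B := by
        rw [← hexp]
        have : A - 1 ≠ 0 := by linarith
        have : A ^ 2 - 1 ≠ 0 := by nlinarith
        field_simp
        ring
      _ ≤ _ := by gcongr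

theorem le_three_mul_log {x : ℝ} (h2 : 2 ≤ x) (h4 : x ≤ 4) : x ≤ 3 * Real.log x := by
  have hchord := strictConcaveOn_log_Ioi.concaveOn.2 (Set.mem_Ioi.2 two_pos)
    (Set.mem_Ioi.2 four_pos) (show 0 ≤ (4 - x) / 2 by linarith) (show 0 ≤ (x - 2) / 2 by linarith)
    (by ring)
  have hlog4 : Real.log 4 = 2 * Real.log 2 := by
    rw [show (4:ℝ) = 2 ^ 2 by norm_num, Real.log_pow, Nat.cast_ofNat]
  rw [smul_eq_mul, smul_eq_mul, smul_eq_mul, smul_eq_mul, hlog4,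
    show (4 - x) / 2 * 2 + (x - 2) / 2 * 4 = x by ring] at hchord
  nlinarith [Real.log_two_gt_d9]

theorem pow_two_pow_sub_one_div_le {M : ℝ} (hM : 1 < M) {k : ℕ} (hk : M ^ 2 ^ k ≤ 2)
    (hk' : 2 < M ^ 2 ^ (k + 1)) : M ^ (2 ^ (k + 1) - 1) / 2 ^ (k + 1) ≤ 3 * (M - 1) := by
  have hsq : M ^ 2 ^ (k + 1) = (M ^ 2 ^ k) ^ 2 := by rw [← pow_mul, pow_succ]
  have hle4 : M ^ 2 ^ (k + 1) ≤ 4 := by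
    rw [hsq]; nlinarith [pow_pos (zero_lt_one.trans hM) (2 ^ k)]
  rw [div_le_iff₀ (by positivity)]
  calc M ^ (2 ^ (k + 1) - 1) ≤ M ^ 2 ^ (k + 1) := pow_le_pow_right₀ hM.le (Nat.sub_le _ _)
    _ ≤ 3 * Real.log (M ^ 2 ^ (k + 1)) := le_three_mul_log hk'.le hle4
    _ = 3 * (2 ^ (k + 1) * Real.log M) := by rw [Real.log_pow]; push_cast; rfl
    _ ≤ 3 * (2 ^ (k + 1) * (M - 1)) := by
      gcongr; exact Real.log_le_sub_one_of_pos (zero_lt_one.trans hM)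
    _ = 3 * (M - 1) * 2 ^ (k + 1) := by ring

theorem exists_pow_two_pow_le_two_lt {M : ℝ} (hM : 1 < M) (hM2 : M ≤ 2) :
    ∃ k : ℕ, M ^ 2 ^ k ≤ 2 ∧ 2 < M ^ 2 ^ (k + 1) := by
  have hex : ∃ k : ℕ, 2 < M ^ 2 ^ k := by
    obtain ⟨k, hk⟩ := pow_unbounded_of_one_lt (2:ℝ) hM
    exact ⟨k, hk.trans_le (pow_le_pow_right₀ hM.le Nat.lt_two_pow_self.le)⟩
  have hpos : Nat.find hex ≠ 0 := fun h => by
    have := Nat.find_spec hex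
    rw [h, pow_zero, pow_one] at this
    linarith
  obtain ⟨k, hk⟩ := Nat.exists_eq_succ_of_ne_zero hpos
  refine ⟨k, not_lt.1 (Nat.find_min hex (by omega)), ?_⟩
  rw [← Nat.succ_eq_add_one, ← hk]
  exact Nat.find_spec hex

theorem midpoint_estimate_bounded_functions
    {E F : Type*} [NormedAddCommGroup E] [NormedSpace ℝ E]
    [NormedAddCommGroup F] [NormedSpace ℝ F]
    (M L : ℝ) (hM1 : 1 < M) (hM2 : M < 1.2) (hL : 0 ≤ L)
    (T : E → F) (hbij : Function.Bijective T)
    (hT : ∀ x y : E, ‖T x - T y‖ ≤ M * ‖x - y‖ + L)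
    (hTinv : ∀ u v : F, ‖Function.invFun T u - Function.invFun T v‖ ≤ M * ‖u - v‖ + L)
    (m : ℝ) (f g : E) (hf : ‖f‖ ≤ m) (hg : ‖g‖ ≤ m) :
    ‖T ((2:ℝ)⁻¹ • (f + g)) - (2:ℝ)⁻¹ • (T f + T g)‖ ≤ 3 * (M - 1) * (2 * m) + (4 / (M - 1)) * L ∧
    3 * (M - 1) * (2 * m) + (4 / (M - 1)) * L ≤ 6 * (M - 1) * m + (4 / (M - 1)) * L := by
  refine ⟨?_, le_of_eq (by ring)⟩
  obtain ⟨k, hk, hk'⟩ := exists_pow_two_pow_le_two_lt hM1 (by linarith)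
  have hfg : ‖f - g‖ ≤ 2 * m := (norm_sub_le f g).trans (by linarith)
  calc midpointDefect T f g
      ≤ midpointBound k M L ‖f - g‖ :=
        IsQuasiIsometryEquiv.midpointDefect_le_midpointBound ⟨hbij, hT, hTinv⟩ (by linarith) k f g
    _ ≤ M ^ (2 ^ (k + 1) - 1) / 2 ^ (k + 1) * ‖f - g‖ + 4 / (M - 1) * L :=
        midpointBound_le hM1 hL k hk _
    _ ≤ 3 * (M - 1) * (2 * m) + 4 / (M - 1) * L := by
        gcongr
        exact pow_two_pow_sub_one_div_le hM1 hk hk'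
end
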